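/- A train moving for 5.5 hours such that over every time interval of length 1 hour it covers exactly 100 km need not move uniformly, and its average speed need not equal 100 km/h: there exists a continuous nondecreasing function f : [0, 5.5] → ℝ with f(0) = 0, f(t+1) − f(t) = 100 for all t ∈ [0, 4.5], but f is not linear and f(5.5)/5.5 ≠ 100. -/

import Mathlib

noncomputable def trainF : ℝ → ℝ := fun x => 100 * x + 10 * (Real.sin (Real.pi * x))^2

lemma trainF_deriv (x : ℝ) :
    HasDerivAt trainF (100 + 20 * Real.sin (Real.pi * x) * Real.cos (Real.pi * x) * Real.pi) x := by
  have h1 : HasDerivAt (fun x : ℝ => Real.pi * x) Real.pi x := by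
    simpa using (hasDerivAt_id x).const_mul Real.pi
  have h2 : HasDerivAt (fun x : ℝ => Real.sin (Real.pi * x)) (Real.cos (Real.pi * x) * Real.pi) x :=
    (Real.hasDerivAt_sin (Real.pi * x)).comp x h1
  have h3 := h2.pow 2
  have h4 := ((hasDerivAt_id x).const_mul (100:ℝ)).add (h3.const_mul 10)
  refine h4.congr_deriv ?_
  ring

lemma trainF_mono : StrictMono trainF := by
  apply strictMono_of_deriv_pos
  intro x
  rw [(trainF_deriv x).deriv]
  have hs1 := Real.neg_one_le_sin (Real.pi * x)
  have hs2 := Real.sin_le_one (Real.pi * x)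
  have hc1 := Real.neg_one_le_cos (Real.pi * x)
  have hc2 := Real.cos_le_one (Real.pi * x)
  have hp : Real.pi ≤ 4 := Real.pi_le_four
  have hp0 : 0 < Real.pi := Real.pi_pos
  nlinarith [sq_nonneg (Real.sin (Real.pi * x) + Real.cos (Real.pi * x)),
    sq_nonneg (Real.sin (Real.pi * x) - Real.cos (Real.pi * x))]

lemma trainF_period (t : ℝ) : trainF (t + 1) - trainF t = 100 := by
  unfold trainF
  have : Real.sin (Real.pi * (t + 1)) = - Real.sin (Real.pi * t) := by
    rw [mul_add, mul_one, Real.sin_add_pi]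
  rw [this]
  ring

lemma trainF_half : trainF 0.5 = 60 := by
  unfold trainF
  have : Real.pi * 0.5 = Real.pi / 2 := by ring
  rw [this, Real.sin_pi_div_two]
  norm_num

theorem train_not_uniform :
    ∃ f : ℝ → ℝ,
      ContinuousOn f (Set.Icc 0 5.5) ∧
      MonotoneOn f (Set.Icc 0 5.5) ∧
      f 0 = 0 ∧
      (∀ t ∈ Set.Icc (0 : ℝ) 4.5, f (t + 1) - f t = 100) ∧
      (¬ ∃ a b : ℝ, ∀ x ∈ Set.Icc (0 : ℝ) 5.5, f x = a * x + b) ∧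
      f 5.5 / 5.5 ≠ 100 := by
  refine ⟨trainF, ?_, ?_, ?_, ?_, ?_, ?_⟩
  · apply Continuous.continuousOn
    unfold trainF
    continuity
  · exact (trainF_mono.monotone).monotoneOn _
  · simp [trainF]
  · intro t _; exact trainF_period t
  · have h0 : trainF 0 = 0 := by simp [trainF]
    have h1 : trainF 1 = 100 := by
      have := trainF_period 0
      rw [h0] at this
      simpa using this
    rintro ⟨a, b, hab⟩
    have e0 := hab 0 (by norm_num)
    have e1 := hab 1 (by norm_num)
    have e05 := hab 0.5 (by norm_num)
    rw [h0] at e0; rw [h1] at e1; rw [trainF_half] at e05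
    nlinarith
  · have p1 := trainF_period 0.5
    have p2 := trainF_period 1.5
    have p3 := trainF_period 2.5
    have p4 := trainF_period 3.5
    have p5 := trainF_period 4.5
    have h05 := trainF_half
    norm_num at p1 p2 p3 p4 p5 ⊢
    nlinarith [p1, p2, p3, p4, p5, h05]
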